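/- Let ξ be a positive quadratic irrational whose regular continued fraction expansion is purely periodic with minimal period (q₁,…,q_l). Then the Denjoy continued fraction expansion of ξ is purely periodic, and its minimal period is obtained from (q₁,…,q_l) by replacing each partial quotient qᵢ by the binary string 1 0 1 0 … 0 1 consisting of qᵢ ones alternating with qᵢ−1 zeroes (regular-to-Denjoy conversion). -/

import Mathlib

/-- A binary quadratic form `A x² + B x y + C y²` with integer coefficients. -/
structure QF where
  a : ℤ
  b : ℤ
  c : ℤ

/-- The discriminant `B² - 4AC` of a form. -/
def QF.disc (f : QF) : ℤ := f.b ^ 2 - 4 * f.a * f.c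

/-- The action of a matrix `[[α, β], [γ, δ]]` on a form:
`f(x,y) ↦ f(αx + βy, γx + δy)`. -/
def QF.transform (f : QF) (α β γ δ : ℤ) : QF :=
  ⟨f.a * α ^ 2 + f.b * α * γ + f.c * γ ^ 2,
   2 * f.a * α * β + f.b * (α * δ + β * γ) + 2 * f.c * γ * δ,
   f.a * β ^ 2 + f.b * β * δ + f.c * δ ^ 2⟩

/-- A form is indefinite if its discriminant is positive and not a perfect square. -/
def QF.IsIndefinite (f : QF) : Prop := 0 < f.disc ∧ ¬ IsSquare f.disc

/-- An indefinite form `(A,B,C)` is Z-reduced if `A,B,C > 0` and `B > A + C`. -/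
def QF.IsZReduced (f : QF) : Prop :=
  f.IsIndefinite ∧ 0 < f.a ∧ 0 < f.b ∧ 0 < f.c ∧ f.a + f.c < f.b

/-- An indefinite form `(A,B,C)` is G-reduced if `AC < 0` and `B > |A + C|`. -/
def QF.IsGReduced (f : QF) : Prop :=
  f.IsIndefinite ∧ f.a * f.c < 0 ∧ |f.a + f.c| < f.b

/-- G-reduced with `A > 0`. -/
def QF.IsGPlus (f : QF) : Prop := f.IsGReduced ∧ 0 < f.a

/-- G-reduced with `A < 0`. -/
def QF.IsGMinus (f : QF) : Prop := f.IsGReduced ∧ f.a < 0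

/-- `(t, u)` is the fundamental solution of `|t² - Δ u²| = 4`:
a solution in positive integers with `u` minimal. -/
def IsFundSol (Δ t u : ℤ) : Prop :=
  0 < t ∧ 0 < u ∧ |t ^ 2 - Δ * u ^ 2| = 4 ∧
    ∀ t' u' : ℤ, 0 < t' → 0 < u' → |t' ^ 2 - Δ * u' ^ 2| = 4 → u ≤ u'

/-- The continuant of a finite sequence of integers. -/
def cont : List ℤ → ℤ
  | [] => 1
  | [q] => q
  | q :: r :: t => q * cont (r :: t) + cont t

/-- `L` is the list of partial quotients of a regular continued fraction expansion of
the rational number `x`: all partial quotients are positive and the value of the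
continued fraction, namely `cont L / cont L.tail`, equals `x`. -/
def IsCF (x : ℚ) (L : List ℤ) : Prop :=
  L ≠ [] ∧ (∀ q ∈ L, 0 < q) ∧ (cont L : ℚ) = x * cont L.tail

/-- The bead sequence `β(f)` of a Z-reduced form `f = (A,B,C)` of discriminant `Δ`:
with `(t,u)` the fundamental solution of `|t² - Δu²| = 4` and `z = (t + Bu)/2`,
it is the continued fraction expansion of `z/(z - Au)` whose number of partial
quotients is even if `t² - Δu² = -4` and odd otherwise. -/
def QF.IsBeta (f : QF) (L : List ℤ) : Prop :=
  ∃ t u : ℤ, IsFundSol f.disc t u ∧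
    IsCF ((((t + f.b * u : ℤ) : ℚ) / 2) / ((((t + f.b * u : ℤ) : ℚ) / 2) - ((f.a * u : ℤ) : ℚ))) L ∧
    (t ^ 2 - f.disc * u ^ 2 = -4 → Even L.length) ∧
    (t ^ 2 - f.disc * u ^ 2 = 4 → Odd L.length)

/-- Dirichlet's map `γ(f)` for `f = (A,B,C)` in `G⁺` of discriminant `Δ`:
with `(t,u)` the fundamental solution of `|t² - Δu²| = 4` and `z = (t + Bu)/2`,
it is the continued fraction expansion of `z/(Au)` whose number of partial
quotients is odd if `t² - Δu² = -4` and even otherwise. -/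
def QF.IsGamma (f : QF) (L : List ℤ) : Prop :=
  ∃ t u : ℤ, IsFundSol f.disc t u ∧
    IsCF ((((t + f.b * u : ℤ) : ℚ) / 2) / ((f.a * u : ℤ) : ℚ)) L ∧
    (t ^ 2 - f.disc * u ^ 2 = -4 → Odd L.length) ∧
    (t ^ 2 - f.disc * u ^ 2 = 4 → Even L.length)

/-- The stars-and-bars map: `(q₁, …, q_l)` is sent to the binary string of length
`q₁ + ⋯ + q_l - 1` whose `j`-th character is `1` exactly at the partial sums
`q₁, q₁ + q₂, …, q₁ + ⋯ + q_{l-1}`. -/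
def sb : List ℤ → List Bool
  | [] => []
  | [q] => List.replicate (q - 1).toNat false
  | q :: r :: t => List.replicate (q - 1).toNat false ++ true :: sb (r :: t)

/-- `σ(f) = sb(β(f))`. -/
def QF.IsSigma (f : QF) (s : List Bool) : Prop :=
  ∃ L : List ℤ, f.IsBeta L ∧ s = sb L

/-- Zagier's reduction operator: `f ↦ f(nx + y, -x)` with `n = ⌈(B + √Δ)/(2A)⌉`. -/
noncomputable def RZ (f : QF) : QF :=
  f.transform ⌈((f.b : ℝ) + Real.sqrt (f.disc : ℝ)) / (2 * (f.a : ℝ))⌉ 1 (-1) 0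

/-- The number `δ` in Gauss's reduction operator: `|δ| = ⌊(B + √Δ)/(2|A|)⌋` with
`δ` having the sign of `A`. -/
noncomputable def gaussDelta (f : QF) : ℤ :=
  f.a.sign * ⌊((f.b : ℝ) + Real.sqrt (f.disc : ℝ)) / (2 * |(f.a : ℝ)|)⌋

/-- Gauss's reduction operator: `f ↦ f(δx + y, -x)`. -/
noncomputable def RG (f : QF) : QF := f.transform (gaussDelta f) 1 (-1) 0

/-- Add `1` to the last entry of a list. -/
def addLast : List ℤ → List ℤ
  | [] => []
  | [q] => [q + 1]
  | q :: r :: t => q :: addLast (r :: t)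

/-- Subtract `1` from the last entry of a list. -/
def subLast : List ℤ → List ℤ
  | [] => []
  | [q] => [q - 1]
  | q :: r :: t => q :: subLast (r :: t)

/-- Subtract `1` from the first entry of a list. -/
def decHead : List ℤ → List ℤ
  | [] => []
  | q :: t => (q - 1) :: t

/-- The operator `T_Z`: `(q₁,…,q_l) ↦ (q₁-1, q₂, …, q_{l-1}, q_l+1)` if `q₁ ≥ 2`;
`(q₂, q₁)` if `q₁ = 1` and `l = 2`; `(q₃, …, q_l, q₂, q₁)` if `q₁ = 1` and `l > 2`. -/
def TZ : List ℤ → List ℤ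
  | [] => []
  | [q] => [q]
  | q :: r :: s => if q = 1 then s ++ [r, 1] else (q - 1) :: addLast (r :: s)

/-- The map `μ` from G-reduced forms to Z-reduced forms. -/
def mu (f : QF) : QF :=
  if 0 < f.a then ⟨f.a, 2 * f.a + f.b, f.a + f.b + f.c⟩
  else ⟨f.a + f.b + f.c, f.b + 2 * f.c, f.c⟩

/-- The section `τ` of `β`: `τ((q₁,…,q_l)) = (A,B,C)` with `A = [q₁-1, q₂, …, q_l]`,
`C = [q₁, …, q_{l-1}, q_l - 1]`, `B = [q₁,…,q_l] + [q₁-1, q₂, …, q_{l-1}, q_l-1]`. -/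
def tau (L : List ℤ) : QF :=
  ⟨cont (decHead L), cont L + cont (subLast (decHead L)), cont (subLast L)⟩

/-- Multiply all coefficients of a form by `u`. -/
def QF.smul (u : ℤ) (f : QF) : QF := ⟨u * f.a, u * f.b, u * f.c⟩

/-- The reversal `(A,B,C)^R = (C,B,A)`. -/
def QF.rev (f : QF) : QF := ⟨f.c, f.b, f.a⟩

/-- The map `ρ((A,B,C)) = (-A, B, -C)`. -/
def rho (f : QF) : QF := ⟨-f.a, f.b, -f.c⟩

/-- A form is primitive if its coefficients have gcd 1. -/
def IsPrimitiveForm (f : QF) : Prop := Int.gcd f.a (Int.gcd f.b f.c) = 1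

/-- `SL₂(ℤ)`-equivalence of forms. -/
def FormEquiv (f g : QF) : Prop :=
  ∃ α β γ δ : ℤ, α * δ - β * γ = 1 ∧ g = f.transform α β γ δ

/-- A nonempty string is primitive if it differs from all of its nontrivial cyclic
shifts. -/
def PrimitiveList {α : Type*} (l : List α) : Prop :=
  l ≠ [] ∧ ∀ n, 0 < n → n < l.length → l.rotate n ≠ l

/-- The continuant `[q₂, …, q_{l-1}]` of the interior of a list, with the convention
that it is `0` for a list of length `≤ 1`. -/
def innerCont (L : List ℤ) : ℤ := if L.length ≤ 1 then 0 else cont (L.tail.dropLast)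

/-- The section `ξ` of `γ`: `ξ((q₁,…,q_l)) = (A,B,C)` with `A = [q₂,…,q_l]`,
`B = [q₁,…,q_l] - [q₂,…,q_{l-1}]`, `C = -[q₁,…,q_{l-1}]`. -/
def xiForm (L : List ℤ) : QF := ⟨cont L.tail, cont L - innerCont L, -(cont L.dropLast)⟩

/-- `p` is the minimal period of the purely periodic sequence `d`. -/
def IsMinPeriod {α : Type*} [Inhabited α] (d : ℕ → α) (p : List α) : Prop :=
  p ≠ [] ∧ (∀ n, d n = p.getD (n % p.length) default) ∧
    ∀ m, 0 < m → (∀ n, d (n + m) = d n) → p.length ≤ m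

/-- `d` is the sequence of partial quotients of the Denjoy continued fraction of `x`
(`true` = quotient 1, `false` = quotient 0): `ξ₀ = x`, `qₙ = 0` if `ξ_{n-1} < 1`,
`qₙ = 1` if `ξ_{n-1} > 1`, and `ξₙ = 1/(ξ_{n-1} - qₙ)`. -/
def IsDenjoySeq (x : ℝ) (d : ℕ → Bool) : Prop :=
  ∃ ξ : ℕ → ℝ, ξ 0 = x ∧
    ∀ n, ((ξ n < 1 ∧ d n = false) ∨ (1 < ξ n ∧ d n = true)) ∧
      ξ (n + 1) = 1 / (ξ n - if d n then 1 else 0)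

/-- `a` is the sequence of partial quotients of the regular continued fraction of `x`. -/
def IsRegCFSeq (x : ℝ) (a : ℕ → ℤ) : Prop :=
  ∃ ξ : ℕ → ℝ, ξ 0 = x ∧ ∀ n, a n = ⌊ξ n⌋ ∧ ξ (n + 1) = 1 / (ξ n - (a n : ℝ))

/-- Regular-to-Denjoy conversion: each partial quotient `q` becomes the string
`1 0 1 0 ⋯ 0 1` of `q` ones alternating with `q - 1` zeroes. -/
def regToDen (L : List ℤ) : List Bool :=
  (L.map fun q => true :: (List.replicate (q - 1).toNat [false, true]).flatten).flatten

/-- Replace each character `0` by the two characters `01`. -/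
def expand01 (s : List Bool) : List Bool :=
  (s.map fun b => if b then [true] else [false, true]).flatten

/-- A quadratic irrational. -/
def IsQuadIrrational (x : ℝ) : Prop :=
  Irrational x ∧ ∃ a b c : ℤ, a ≠ 0 ∧ (a : ℝ) * x ^ 2 + (b : ℝ) * x + (c : ℝ) = 0

open Function

/-!
If `⌊y⌋ = q ≥ 1`, the Denjoy algorithm started at `y` alternates between `y - j > 1` (digit 1)
and `1 / (y - j - 1) < 1` (digit 0), so it reads the word `1 (0 1)^(q-1)` and then
lands on `1 / (y - q)`, the next complete quotient of the regular expansion. The Denjoy sequence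
of `x` is therefore the concatenation of the words of its regular partial quotients, which has
period `regToDen Q`. In this concatenation two consecutive ones occur exactly across block
boundaries, and each block is followed by a one. A period `m` of the Denjoy sequence is, like
`|regToDen Q|`, preceded and followed by a one, so it is a block boundary `m = blockStart a s`,
and it forces period `s` on the regular partial quotients.
Minimality of `Q` then gives `s ≥ |Q|`, hence `m ≥ |regToDen Q|`.
-/

lemma Function.Periodic.apply_sub_one_eq {α : Type*} {f : ℕ → α} {m N : ℕ} (hm : Periodic f m)
    (hN : Periodic f N) (hm0 : 0 < m) (hN0 : 0 < N) : f (m - 1) = f (N - 1) := by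
  -- both sides equal `f (m * N - 1)`
  obtain ⟨m, rfl⟩ : ∃ m', m = m' + 1 := ⟨m - 1, by omega⟩
  obtain ⟨N, rfl⟩ : ∃ N', N = N' + 1 := ⟨N - 1, by omega⟩
  simp only [Nat.add_sub_cancel]
  rw [← hm.nat_mul N m, ← hN.nat_mul m N, Nat.cast_id, Nat.cast_id]
  congr 1
  ring

lemma IsMinPeriod.periodic {α : Type*} [Inhabited α] {d : ℕ → α} {p : List α}
    (h : IsMinPeriod d p) : Periodic d p.length := fun n => by
  rw [h.2.1, h.2.1 n, Nat.add_mod_right]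


noncomputable def denjoyDigit (y : ℝ) : Bool := decide (1 < y)

noncomputable def denjoyStep (y : ℝ) : ℝ := 1 / (y - if denjoyDigit y then 1 else 0)

lemma denjoyDigit_of_one_lt {y : ℝ} (hy : 1 < y) : denjoyDigit y = true := decide_eq_true hy

lemma denjoyDigit_of_lt_one {y : ℝ} (hy : y < 1) : denjoyDigit y = false :=
  decide_eq_false hy.not_gt

lemma denjoyStep_of_one_lt {y : ℝ} (hy : 1 < y) : denjoyStep y = 1 / (y - 1) := by
  simp [denjoyStep, denjoyDigit_of_one_lt hy]

lemma denjoyStep_of_lt_one {y : ℝ} (hy : y < 1) : denjoyStep y = 1 / y := by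
  simp [denjoyStep, denjoyDigit_of_lt_one hy]

lemma Irrational.denjoyStep {y : ℝ} (hy : Irrational y) : Irrational (denjoyStep y) := by
  rw [_root_.denjoyStep, one_div]
  split_ifs
  · simpa using (hy.sub_intCast 1).inv
  · simpa using hy.inv

lemma isDenjoySeq_iterate_denjoyStep {x : ℝ} (hx : Irrational x) :
    IsDenjoySeq x fun n => denjoyDigit (denjoyStep^[n] x) := by
  have hirr : ∀ n, Irrational (denjoyStep^[n] x) := fun n => by
    induction n with
    | zero => exact hx
    | succ n ih => rw [iterate_succ_apply']; exact ih.denjoyStep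
  refine ⟨fun n => denjoyStep^[n] x, rfl, fun n => ⟨?_, iterate_succ_apply' _ _ _⟩⟩
  rcases (hirr n).ne_one.lt_or_gt with h | h
  · exact Or.inl ⟨h, denjoyDigit_of_lt_one h⟩
  · exact Or.inr ⟨h, denjoyDigit_of_one_lt h⟩

lemma iterate_two_denjoyStep {y : ℝ} (hy : 2 < y) : denjoyStep^[2] y = y - 1 := by
  have h : 1 / (y - 1) < 1 := (div_lt_one (by linarith)).2 (by linarith)
  rw [iterate_succ_apply', iterate_one, denjoyStep_of_one_lt (y := y) (by linarith),
    denjoyStep_of_lt_one h, one_div_one_div]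

lemma denjoyDigit_iterate_of_lt (t : ℕ) {y : ℝ} (hy : (t : ℝ) + 1 < y) :
    (∀ i < 2 * t + 1, denjoyDigit (denjoyStep^[i] y) = decide (i % 2 = 0)) ∧
      denjoyStep^[2 * t + 1] y = 1 / (y - (t + 1)) := by
  induction t generalizing y with
  | zero =>
    norm_num at hy
    refine ⟨fun i hi => ?_, by simp [denjoyStep_of_one_lt hy]⟩
    obtain rfl : i = 0 := by omega
    exact denjoyDigit_of_one_lt hy
  | succ t ih =>
    push_cast at hy
    obtain ⟨ihd, ihs⟩ := ih (y := y - 1) (by linarith)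
    have h2 := iterate_two_denjoyStep (y := y) (by linarith [t.cast_nonneg (α := ℝ)])
    refine ⟨fun i hi => ?_, ?_⟩
    · match i with
      | 0 => exact denjoyDigit_of_one_lt (by simp; linarith [t.cast_nonneg (α := ℝ)])
      | 1 =>
        rw [iterate_one, denjoyStep_of_one_lt (by linarith [t.cast_nonneg (α := ℝ)])]
        exact denjoyDigit_of_lt_one ((div_lt_one (by linarith)).2 (by linarith))
      | i + 2 => rw [iterate_add_apply, h2, ihd i (by omega)]; simp
    · rw [show 2 * (t + 1) + 1 = 2 * t + 1 + 2 by ring, iterate_add_apply, h2, ihs]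
      push_cast; ring_nf

def blockLen (q : ℤ) : ℕ := 2 * (q - 1).toNat + 1

def blockStart (a : ℕ → ℤ) (k : ℕ) : ℕ := ∑ j ∈ Finset.range k, blockLen (a j)

lemma denjoyDigit_iterate_of_intCast_lt {q : ℤ} (hq : 1 ≤ q) {y : ℝ} (hy : (q : ℝ) < y) :
    (∀ i < blockLen q, denjoyDigit (denjoyStep^[i] y) = decide (i % 2 = 0)) ∧
      denjoyStep^[blockLen q] y = 1 / (y - q) := by
  have ht : ((q - 1).toNat : ℝ) + 1 = q := by
    have : ((q - 1).toNat : ℤ) = q - 1 := Int.toNat_of_nonneg (by omega)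
    rw [← Int.cast_natCast, this]; push_cast; ring
  simpa only [blockLen, ht] using denjoyDigit_iterate_of_lt (q - 1).toNat (ht ▸ hy)

/-- `d` is the concatenation of the words `1 (0 1)^(a k - 1)`, `k = 0, 1, 2, …`. -/
def IsDenjoyBlockSeq (a : ℕ → ℤ) (d : ℕ → Bool) : Prop :=
  ∀ k, ∀ i < blockLen (a k), d (blockStart a k + i) = decide (i % 2 = 0)

lemma alternating_eq_map_range (t : ℕ) :
    true :: (List.replicate t [false, true]).flatten =
      (List.range (2 * t + 1)).map fun i => decide (i % 2 = 0) := by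
  induction t with
  | zero => rfl
  | succ t ih =>
    rw [List.replicate_succ, List.flatten_cons, show 2 * (t + 1) + 1 = 2 * t + 1 + 1 + 1 by ring,
      List.range_succ_eq_map, List.range_succ_eq_map]
    simp only [List.cons_append, List.nil_append, ih, List.map_cons, List.map_map]
    simp [Function.comp_def]
    omega

lemma regToDen_append_singleton (L : List ℤ) (q : ℤ) :
    regToDen (L ++ [q]) =
      regToDen L ++ (List.range (blockLen q)).map fun i => decide (i % 2 = 0) := by
  rw [regToDen, List.map_append, List.flatten_append, List.map_singleton, List.flatten_singleton,
    alternating_eq_map_range]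
  rfl

lemma regToDen_ne_nil {L : List ℤ} (hL : L ≠ []) : regToDen L ≠ [] := by
  cases L with
  | nil => exact absurd rfl hL
  | cons q L => simp [regToDen]

section RegularCF

variable {ξ : ℕ → ℝ} {a : ℕ → ℤ}

lemma irrational_of_regCF (hξ : ∀ n, a n = ⌊ξ n⌋ ∧ ξ (n + 1) = 1 / (ξ n - a n))
    (h0 : Irrational (ξ 0)) (n : ℕ) : Irrational (ξ n) := by
  induction n with
  | zero => exact h0
  | succ n ih => rw [(hξ n).2, one_div]; exact (ih.sub_intCast _).inv

lemma intCast_lt_of_regCF (hξ : ∀ n, a n = ⌊ξ n⌋ ∧ ξ (n + 1) = 1 / (ξ n - a n))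
    (h0 : Irrational (ξ 0)) (n : ℕ) : (a n : ℝ) < ξ n :=
  ((hξ n).1 ▸ Int.floor_le (ξ n)).lt_of_ne ((irrational_of_regCF hξ h0 n).ne_int _).symm

lemma one_le_succ_of_regCF (hξ : ∀ n, a n = ⌊ξ n⌋ ∧ ξ (n + 1) = 1 / (ξ n - a n))
    (h0 : Irrational (ξ 0)) (n : ℕ) : 1 ≤ a (n + 1) := by
  have hlt := intCast_lt_of_regCF hξ h0 n
  have hle : ξ n < a n + 1 := (hξ n).1 ▸ Int.lt_floor_add_one (ξ n)
  have : 1 ≤ ξ (n + 1) := by rw [(hξ n).2, le_div_iff₀ (by linarith)]; linarith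
  rw [(hξ (n + 1)).1]
  exact Int.le_floor.2 (by exact_mod_cast this)

lemma iterate_denjoyStep_blockStart (hpos : ∀ n, 1 ≤ a n) (hlt : ∀ n, (a n : ℝ) < ξ n)
    (hstep : ∀ n, ξ (n + 1) = 1 / (ξ n - a n)) (k : ℕ) :
    denjoyStep^[blockStart a k] (ξ 0) = ξ k := by
  induction k with
  | zero => rfl
  | succ k ih =>
    rw [blockStart, Finset.sum_range_succ, add_comm, iterate_add_apply, ← blockStart, ih, hstep,
      (denjoyDigit_iterate_of_intCast_lt (hpos k) (hlt k)).2]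

lemma isDenjoyBlockSeq_iterate_denjoyStep (hpos : ∀ n, 1 ≤ a n) (hlt : ∀ n, (a n : ℝ) < ξ n)
    (hstep : ∀ n, ξ (n + 1) = 1 / (ξ n - a n)) :
    IsDenjoyBlockSeq a fun n => denjoyDigit (denjoyStep^[n] (ξ 0)) := by
  intro k i hi
  show denjoyDigit (denjoyStep^[blockStart a k + i] (ξ 0)) = _
  rw [add_comm, iterate_add_apply, iterate_denjoyStep_blockStart hpos hlt hstep]
  exact (denjoyDigit_iterate_of_intCast_lt (hpos k) (hlt k)).1 i hi

end RegularCF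

section BlockSeq

variable {a : ℕ → ℤ} {d : ℕ → Bool}

@[simp] lemma blockStart_zero (a : ℕ → ℤ) : blockStart a 0 = 0 := rfl

lemma blockStart_succ (a : ℕ → ℤ) (k : ℕ) :
    blockStart a (k + 1) = blockStart a k + blockLen (a k) :=
  Finset.sum_range_succ _ _

lemma blockStart_mono (a : ℕ → ℤ) : Monotone (blockStart a) := fun _ _ h =>
  Finset.sum_le_sum_of_subset (Finset.range_subset_range.2 h)

lemma blockStart_add_of_periodic {l : ℕ} (hper : Periodic a l) (k : ℕ) :
    blockStart a (k + l) = blockStart a k + blockStart a l := by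
  rw [blockStart, blockStart, blockStart, add_comm k l, Finset.sum_range_add, add_comm]
  congr 1
  exact Finset.sum_congr rfl fun j _ => by rw [add_comm, hper]

lemma exists_eq_blockStart_add (a : ℕ → ℤ) (n : ℕ) :
    ∃ k, ∃ i < blockLen (a k), n = blockStart a k + i := by
  induction n with
  | zero => exact ⟨0, 0, by simp [blockLen], rfl⟩
  | succ n ih =>
    obtain ⟨k, i, hi, rfl⟩ := ih
    by_cases h : i + 1 < blockLen (a k)
    · exact ⟨k, i + 1, h, rfl⟩
    · exact ⟨k + 1, 0, by simp [blockLen], by rw [blockStart_succ]; omega⟩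

namespace IsDenjoyBlockSeq

lemma apply_blockStart (hd : IsDenjoyBlockSeq a d) (k : ℕ) : d (blockStart a k) = true := by
  simpa using hd k 0 (by simp [blockLen])

lemma apply_blockStart_sub_one (hd : IsDenjoyBlockSeq a d) {k : ℕ} (hk : 0 < k) :
    d (blockStart a k - 1) = true := by
  obtain ⟨k, rfl⟩ := Nat.exists_eq_add_of_lt hk
  have := hd k (blockLen (a k) - 1) (by simp [blockLen])
  rw [zero_add, blockStart_succ, Nat.add_sub_assoc (by simp [blockLen]), this]
  simp [blockLen]

lemma periodic (hd : IsDenjoyBlockSeq a d) {l : ℕ} (hper : Periodic a l) :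
    Periodic d (blockStart a l) := by
  intro n
  obtain ⟨k, i, hi, rfl⟩ := exists_eq_blockStart_add a n
  rw [add_right_comm, ← blockStart_add_of_periodic hper, hd _ _ (by rwa [hper]), hd k i hi]

lemma map_range (hd : IsDenjoyBlockSeq a d) (K : ℕ) :
    (List.range (blockStart a K)).map d = regToDen ((List.range K).map a) := by
  induction K with
  | zero => rfl
  | succ K ih =>
    rw [blockStart_succ, List.range_add, List.map_append, ih, List.range_succ, List.map_append,
      List.map_singleton, regToDen_append_singleton, List.map_map]
    congr 1
    exact List.map_congr_left fun i hi => hd K i (List.mem_range.1 hi)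

lemma exists_blockStart_eq (hd : IsDenjoyBlockSeq a d) {m : ℕ} (hm : 0 < m)
    (h₁ : d (m - 1) = true) (h₂ : d m = true) : ∃ s, blockStart a s = m := by
  obtain ⟨k, i, hi, rfl⟩ := exists_eq_blockStart_add a m
  rcases Nat.eq_zero_or_pos i with rfl | hi0
  · exact ⟨k, rfl⟩
  · rw [hd k i hi] at h₂
    rw [show blockStart a k + i - 1 = blockStart a k + (i - 1) by omega,
      hd k (i - 1) (by omega)] at h₁
    simp only [decide_eq_true_eq] at h₁ h₂
    omega

/-- A block is followed by a one, so its length is visible in `d`. -/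
lemma blockLen_le_of_apply_eq (hd : IsDenjoyBlockSeq a d) {k k' : ℕ}
    (h : d (blockStart a k + blockLen (a k')) = d (blockStart a k' + blockLen (a k'))) :
    blockLen (a k) ≤ blockLen (a k') := by
  by_contra hlt
  rw [hd k _ (by omega), ← blockStart_succ, apply_blockStart hd] at h
  simp [blockLen] at h

lemma blockLen_eq_of_periodic (hd : IsDenjoyBlockSeq a d) {m k k' : ℕ} (hm : Periodic d m)
    (hk : blockStart a k' = blockStart a k + m) : blockLen (a k') = blockLen (a k) := by
  have hshift : ∀ j, d (blockStart a k' + j) = d (blockStart a k + j) := fun j => by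
    rw [hk, add_right_comm, hm]
  exact le_antisymm (hd.blockLen_le_of_apply_eq (hshift _))
    (hd.blockLen_le_of_apply_eq (hshift _).symm)

lemma periodic_of_periodic_blockStart (hd : IsDenjoyBlockSeq a d) (hpos : ∀ n, 1 ≤ a n) {s : ℕ}
    (hs : Periodic d (blockStart a s)) : Periodic a s := by
  have hstart : ∀ k, blockStart a (k + s) = blockStart a k + blockStart a s := by
    intro k
    induction k with
    | zero => simp
    | succ k ih =>
      rw [add_right_comm, blockStart_succ, blockStart_succ, ih,
        hd.blockLen_eq_of_periodic hs ih]
      ring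
  intro k
  have h := hd.blockLen_eq_of_periodic hs (hstart k)
  have := hpos k
  have := hpos (k + s)
  simp only [blockLen] at h
  omega

lemma isMinPeriod_regToDen (hd : IsDenjoyBlockSeq a d) (hpos : ∀ n, 1 ≤ a n) {Q : List ℤ}
    (hQ : IsMinPeriod a Q) : IsMinPeriod d (regToDen Q) := by
  have hl : 0 < Q.length := List.length_pos_iff.2 hQ.1
  have hrange : (List.range Q.length).map a = Q := List.ext_getElem (by simp) fun j hj _ => by
    have hj' : j < Q.length := by simpa using hj
    simpa [Nat.mod_eq_of_lt hj', hj'] using hQ.2.1 j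
  have hw : (List.range (blockStart a Q.length)).map d = regToDen Q := by
    rw [hd.map_range, hrange]
  have hlen : (regToDen Q).length = blockStart a Q.length := by simp [← hw]
  have hN0 : 0 < blockStart a Q.length := hlen ▸ List.length_pos_iff.2 (regToDen_ne_nil hQ.1)
  have hdN := hd.periodic hQ.periodic
  refine ⟨regToDen_ne_nil hQ.1, fun n => ?_, fun m hm hdm => ?_⟩
  · rw [hlen, ← hdN.map_mod_nat, ← hw, List.getD_eq_getElem _ _ (by simp [Nat.mod_lt _ hN0])]
    simp
  · have h₁ : d (m - 1) = true := by
      rw [Periodic.apply_sub_one_eq hdm hdN hm hN0, hd.apply_blockStart_sub_one hl]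
    have h₂ : d m = true := by simpa using (hdm 0).trans (hd.apply_blockStart 0)
    obtain ⟨s, rfl⟩ := hd.exists_blockStart_eq hm h₁ h₂
    have hs : 0 < s := Nat.pos_of_ne_zero fun h => by simp [h] at hm
    exact hlen ▸ blockStart_mono a (hQ.2.2 s hs (hd.periodic_of_periodic_blockStart hpos hdm))

end IsDenjoyBlockSeq

end BlockSeq

theorem stmt18_general (x : ℝ) (hquad : IsQuadIrrational x)
    (a : ℕ → ℤ) (Q : List ℤ) (ha : IsRegCFSeq x a) (hQ : IsMinPeriod a Q) :
    ∃ d : ℕ → Bool, IsDenjoySeq x d ∧ IsMinPeriod d (regToDen Q) := by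
  obtain ⟨ξ, rfl, hξ⟩ := ha
  have hl : 0 < Q.length := List.length_pos_iff.2 hQ.1
  have hpos : ∀ n, 1 ≤ a n := by
    have hsucc := one_le_succ_of_regCF hξ hquad.1
    rintro (_ | n)
    · rw [← hQ.periodic 0, zero_add, ← Nat.sub_add_cancel hl]
      exact hsucc _
    · exact hsucc n
  have hd := isDenjoyBlockSeq_iterate_denjoyStep hpos (intCast_lt_of_regCF hξ hquad.1)
    fun n => (hξ n).2
  exact ⟨_, isDenjoySeq_iterate_denjoyStep hquad.1, hd.isMinPeriod_regToDen hpos hQ⟩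

/-- **Theorem (regular-to-Denjoy conversion).** If `x > 0` is a quadratic
irrational whose regular continued fraction is purely periodic with minimal
period `Q`, then the Denjoy continued fraction of `x` is purely periodic with
minimal period obtained from `Q` by regular-to-Denjoy conversion. -/
theorem stmt18 (x : ℝ) (hx : 0 < x) (hquad : IsQuadIrrational x)
    (a : ℕ → ℤ) (Q : List ℤ) (ha : IsRegCFSeq x a) (hQ : IsMinPeriod a Q) :
    ∃ d : ℕ → Bool, IsDenjoySeq x d ∧ IsMinPeriod d (regToDen Q) :=
  stmt18_general x hquad a Q ha hQ
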